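/- Let F_1, F_2, ... be nonzero elements of a field of rational functions and let N_n(x,a) be the matrix defined recursively below; let Ṅ_n(x,a) be N_n(x,a) with its last row and first column removed. Then det Ṅ_n(x,a) = (−1)^{binom(n,2)} a^n (Π_{k=1}^n F_k) x^n Π_{m=1}^{n−1} Π_{k=1}^{n−m}(x − a q^{k−1}[m]_q). -/

import Mathlib

/-!
`N_n` is block upper triangular with upper bidiagonal diagonal blocks, so
`det N_n = ∏_{k ≤ n} x T_k` with `T_k = ∏_{i < k} (x - a q^i [k-i]_q)`, and `det Ṅ_n` is, up
to the sign `(-1)^{|N_n| - 1}`, the (first, last) entry of the adjugate of `N_n`. An explicit vector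
`u` with first entry `a^n F_n!` satisfies `N_n u = x T_n e_last`; row by row this is the identity
`[n-i]_q = [g-i]_q + q^{g-i} [n-g]_q`. Applying `adj N_n` gives
`(∏_{k < n} x T_k) u = adj N_n e_last` as soon as `x T_n` can be cancelled, which is the case
when `x` is an indeterminate. Specializing `x` and reindexing `∏_{k < n} T_k` gives the formula.
-/

noncomputable section

open Finset

/-- `Nsz n = (n+1)(n+2)/2`, the size of the matrix `N_n(x,a)`. -/
def Nsz : ℕ → ℕ
  | 0 => 1
  | n + 1 => Nsz n + (n + 2)

theorem Nsz_pos (n : ℕ) : 0 < Nsz n := by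
  cases n <;> simp [Nsz]

variable {K : Type*} [Field K]

/-- The `q`-integer `[m]_q = 1 + q + ⋯ + q^{m-1}`. -/
def qint (q : K) (m : ℕ) : K := ∑ j ∈ Finset.range m, q ^ j

/-- The `q`-factorial `[m]_q!`. -/
def qfact (q : K) (m : ℕ) : K := ∏ j ∈ Finset.Icc 1 m, qint q j

/-- `F`-factorial `F_m! = F_1 F_2 ⋯ F_m` (equal to `1` for `m = 0`). -/
def Ffact (F : ℕ → K) (m : ℕ) : K := ∏ j ∈ Finset.Icc 1 m, F j

/-- The lower-right block `N̂_n` of `N_{n+1}(x,a)`: the `(n+2)×(n+2)` matrix with (1-based)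
entries `x δ_{ij} - a q^{i-1} [(n+2)-i]_q (δ_{ij} + δ_{i+1,j})`. -/
def Nhat (x a q : K) (n : ℕ) : Matrix (Fin (n + 2)) (Fin (n + 2)) K := fun i j =>
  x * (if (i : ℕ) = (j : ℕ) then 1 else 0) -
    a * q ^ (i : ℕ) * qint q (n + 1 - (i : ℕ)) *
      ((if (i : ℕ) = (j : ℕ) then 1 else 0) + (if (i : ℕ) + 1 = (j : ℕ) then 1 else 0))

/-- The upper-right block `N̄_n` of `N_{n+1}(x,a)`: only its last `n+1` rows are nonzero,
and those form the `(n+1)×(n+2)` matrix with (1-based) entries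
`-a F_{n+1} (δ_{ij} + δ_{i+1,j})`. -/
def Nbar (a : K) (F : ℕ → K) (n : ℕ) : Matrix (Fin (Nsz n)) (Fin (n + 2)) K := fun r j =>
  if Nsz n ≤ (r : ℕ) + (n + 1) then
    -a * F (n + 1) *
      ((if (r : ℕ) - (Nsz n - (n + 1)) = (j : ℕ) then 1 else 0) +
        (if (r : ℕ) - (Nsz n - (n + 1)) + 1 = (j : ℕ) then 1 else 0))
  else 0

/-- The recursively defined matrix `N_n(x,a)`. -/
def Nmat (x a q : K) (F : ℕ → K) : (n : ℕ) → Matrix (Fin (Nsz n)) (Fin (Nsz n)) K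
  | 0 => fun _ _ => x
  | n + 1 => fun p r =>
      Matrix.fromBlocks (Nmat x a q F n) (Nbar a F n) 0 (Nhat x a q n)
        (finSumFinEquiv.symm p) (finSumFinEquiv.symm r)

/-- `Ṅ_n(x,a)`: the matrix `N_n(x,a)` with its last row and first column deleted. -/
def Ndot (x a q : K) (F : ℕ → K) (n : ℕ) :
    Matrix (Fin (Nsz n - 1)) (Fin (Nsz n - 1)) K := fun i j =>
  Nmat x a q F n ⟨(i : ℕ), lt_of_lt_of_le i.isLt (Nat.sub_le _ _)⟩
    ⟨(j : ℕ) + 1, by have := j.isLt; have := Nsz_pos n; omega⟩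

open Matrix

lemma add_one_le_Nsz (n : ℕ) : n + 1 ≤ Nsz n := by
  induction n with
  | zero => rfl
  | succ n ih => simp only [Nsz]; omega

lemma Nsz_sub_one (n : ℕ) : Nsz n - 1 = n.choose 2 + 2 * n := by
  induction n with
  | zero => rfl
  | succ n ih =>
    have := Nsz_pos n
    have hchoose : (n + 1).choose 2 = n.choose 1 + n.choose 2 := Nat.choose_succ_succ n 1
    rw [Nsz, hchoose, Nat.choose_one_right]
    omega

lemma prod_range_add_one_eq_prod_Icc {M : Type*} [CommMonoid M] (f : ℕ → M) (n : ℕ) :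
    ∏ h ∈ range n, f (h + 1) = ∏ j ∈ Icc 1 n, f j := by
  rw [range_eq_Ico, prod_Ico_add' f 0 n 1, zero_add, Ico_add_one_right_eq_Icc]

lemma prod_Icc_prod_Icc_eq_prod_range_prod_range {M : Type*} [CommMonoid M] (f : ℕ → ℕ → M)
    (n : ℕ) :
    ∏ m ∈ Icc 1 (n - 1), ∏ k ∈ Icc 1 (n - m), f m (k - 1) =
      ∏ k ∈ range n, ∏ i ∈ range k, f (k - i) i := by
  rw [prod_sigma', prod_sigma']
  refine prod_nbij' (fun p => ⟨p.1 + p.2 - 1, p.2 - 1⟩) (fun p => ⟨p.1 - p.2, p.2 + 1⟩)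
    ?_ ?_ ?_ ?_ ?_ <;> simp only [mem_sigma, mem_Icc, mem_range, Sigma.forall]
  · intro m k h; omega
  · intro k i h; omega
  · intro m k h; ext <;> simp <;> omega
  · intro k i h; ext <;> simp; omega
  · intro m k h; congr 1; omega

section Adjugate

variable {R : Type*} [CommRing R]

lemma mul_eq_adjugate_of_mulVec_eq_smul_single {ι : Type*} [Fintype ι] [DecidableEq ι]
    {M : Matrix ι ι R} {u : ι → R} {c d : R} {j : ι} (hd : IsLeftRegular d)
    (hdet : M.det = c * d) (hMu : M *ᵥ u = d • Pi.single j 1) (i : ι) :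
    c * u i = M.adjugate i j := by
  have h := congrFun (congrArg (M.adjugate *ᵥ ·) hMu) i
  simp only [mulVec_mulVec, adjugate_mul, hdet, smul_mulVec, one_mulVec, mulVec_smul,
    mulVec_single_one, col_apply, Pi.smul_apply, smul_eq_mul] at h
  exact hd (show d * (c * u i) = d * M.adjugate i j by rw [← h]; ring)

lemma adjugate_apply_zero_last {m : ℕ} (M : Matrix (Fin m) (Fin m) R) (hm : 0 < m) :
    M.adjugate ⟨0, hm⟩ ⟨m - 1, Nat.sub_lt hm one_pos⟩ =
      (-1) ^ (m - 1) * (Matrix.of fun (i j : Fin (m - 1)) =>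
        M ⟨i, by omega⟩ ⟨j + 1, by omega⟩).det := by
  obtain ⟨s, rfl⟩ : ∃ s, m = s + 1 := ⟨m - 1, by omega⟩
  rw [show (⟨s + 1 - 1, _⟩ : Fin (s + 1)) = Fin.last s from Fin.ext (by simp),
    adjugate_fin_succ_eq_det_submatrix]
  simp only [Fin.val_last, add_zero, Fin.succAbove_last, Nat.add_sub_cancel]
  rfl

end Adjugate

section CommRing

variable {R : Type*} [CommRing R]

/- `qint`, `Nhat`, `Nbar` and `Nmat` over an arbitrary commutative ring, so that `x` can be taken
to be an indeterminate. -/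
def qintR (q : R) (m : ℕ) : R := ∑ j ∈ range m, q ^ j

@[simp] lemma qintR_zero (q : R) : qintR q 0 = 0 := by simp [qintR]

lemma qintR_add (q : R) (s t : ℕ) : qintR q (s + t) = qintR q s + q ^ s * qintR q t := by
  simp only [qintR, sum_range_add, mul_sum, pow_add]

lemma map_qintR {S : Type*} [CommRing S] (φ : R →+* S) (q : R) (m : ℕ) :
    φ (qintR q m) = qintR (φ q) m := by
  simp [qintR]

def NhatR (x a q : R) (n : ℕ) : Matrix (Fin (n + 2)) (Fin (n + 2)) R := fun i j =>
  x * (if (i : ℕ) = (j : ℕ) then 1 else 0) -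
    a * q ^ (i : ℕ) * qintR q (n + 1 - (i : ℕ)) *
      ((if (i : ℕ) = (j : ℕ) then 1 else 0) + (if (i : ℕ) + 1 = (j : ℕ) then 1 else 0))

def NbarR (a : R) (F : ℕ → R) (n : ℕ) : Matrix (Fin (Nsz n)) (Fin (n + 2)) R := fun r j =>
  if Nsz n ≤ (r : ℕ) + (n + 1) then
    -a * F (n + 1) *
      ((if (r : ℕ) - (Nsz n - (n + 1)) = (j : ℕ) then 1 else 0) +
        (if (r : ℕ) - (Nsz n - (n + 1)) + 1 = (j : ℕ) then 1 else 0))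
  else 0

def blockEquiv (m : ℕ) : Fin (Nsz m) ⊕ Fin (m + 2) ≃ Fin (Nsz (m + 1)) := finSumFinEquiv

@[simp] lemma blockEquiv_inl_val {m : ℕ} (i : Fin (Nsz m)) :
    (blockEquiv m (Sum.inl i) : ℕ) = i := rfl

@[simp] lemma blockEquiv_inr_val {m : ℕ} (j : Fin (m + 2)) :
    (blockEquiv m (Sum.inr j) : ℕ) = Nsz m + j := rfl

def NmatR (x a q : R) (F : ℕ → R) : (n : ℕ) → Matrix (Fin (Nsz n)) (Fin (Nsz n)) R
  | 0 => fun _ _ => x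
  | n + 1 => (fromBlocks (NmatR x a q F n) (NbarR a F n) 0 (NhatR x a q n)).submatrix
      (blockEquiv n).symm (blockEquiv n).symm

lemma Nmat_eq_NmatR {K : Type*} [Field K] (x a q : K) (F : ℕ → K) (n : ℕ) :
    Nmat x a q F n = NmatR x a q F n := by
  induction n with
  | zero => rfl
  | succ n ih => simp only [Nmat, NmatR, ih]; rfl

end CommRing

section Blocks

variable {R : Type*} [CommRing R] (x a q : R) (F : ℕ → R)

lemma NmatR_succ_mulVec (m : ℕ) (w : Fin (Nsz m) → R) (v : Fin (m + 2) → R) :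
    NmatR x a q F (m + 1) *ᵥ (Sum.elim w v ∘ (blockEquiv m).symm) =
      Sum.elim (NmatR x a q F m *ᵥ w + NbarR a F m *ᵥ v) (NhatR x a q m *ᵥ v) ∘
        (blockEquiv m).symm := by
  rw [NmatR, submatrix_mulVec_equiv, fromBlocks_mulVec]
  ext r
  simp [Function.comp_def]

lemma NhatR_mulVec_apply (m : ℕ) (f : ℕ → R) (j : Fin (m + 2)) :
    (NhatR x a q m *ᵥ fun k => f k) j =
      (x - a * q ^ (j : ℕ) * qintR q (m + 1 - j)) * f j -
        a * q ^ (j : ℕ) * qintR q (m + 1 - j) * f (j + 1) := by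
  simp only [mulVec, dotProduct, NhatR]
  rw [Fin.sum_univ_eq_sum_range (fun k => (x * (if (j : ℕ) = k then 1 else 0) -
    a * q ^ (j : ℕ) * qintR q (m + 1 - j) *
      ((if (j : ℕ) = k then 1 else 0) + (if (j : ℕ) + 1 = k then 1 else 0))) * f k)]
  simp only [mul_ite, mul_one, mul_zero, mul_add, sub_mul, ite_mul, zero_mul, add_mul,
    sum_sub_distrib, sum_ite_eq, mem_range, Fin.is_lt, ↓reduceIte, sum_add_distrib,
    add_lt_add_iff_right, Order.lt_add_one_iff]
  split_ifs with hj
  · ring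
  · rw [show m + 1 - (j : ℕ) = 0 by omega, qintR_zero]
    ring

lemma NbarR_mulVec_apply (m : ℕ) (f : ℕ → R) (r : Fin (Nsz m)) :
    (NbarR a F m *ᵥ fun k => f k) r =
      if Nsz m ≤ r + (m + 1) then
        -(a * F (m + 1)) * (f (r - (Nsz m - (m + 1))) + f (r - (Nsz m - (m + 1)) + 1))
      else 0 := by
  simp only [mulVec, dotProduct, NbarR]
  rw [Fin.sum_univ_eq_sum_range (fun k => (if Nsz m ≤ r + (m + 1) then
    -a * F (m + 1) *
      ((if (r : ℕ) - (Nsz m - (m + 1)) = k then 1 else 0) +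
        (if (r : ℕ) - (Nsz m - (m + 1)) + 1 = k then 1 else 0)) else 0) * f k)]
  split_ifs with h
  · have := r.isLt
    have := add_one_le_Nsz m
    simp only [neg_mul, mul_add, mul_ite, mul_one, mul_zero, add_mul, ite_mul, zero_mul,
      sum_add_distrib, sum_ite_eq, mem_range, add_lt_add_iff_right, Order.lt_add_one_iff,
      tsub_le_iff_right]
    rw [if_pos (by omega), if_pos (by omega)]
  · simp

def diagProd (n i : ℕ) : R := ∏ k ∈ range i, (x - a * q ^ k * qintR q (n - k))

lemma det_NhatR (m : ℕ) : (NhatR x a q m).det = diagProd x a q (m + 1) (m + 1) * x := by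
  have hTri : (NhatR x a q m).IsUpperTriangular := fun i j (hij : j < i) => by
    simp only [NhatR]
    rw [if_neg (by omega), if_neg (by omega)]
    ring
  rw [det_of_isUpperTriangular hTri, Fin.prod_univ_castSucc]
  simp [NhatR, diagProd, Fin.prod_univ_eq_prod_range (fun k => x - a * q ^ k * qintR q (m + 1 - k))]

lemma det_NmatR (n : ℕ) :
    (NmatR x a q F n).det = ∏ k ∈ range (n + 1), x * diagProd x a q k k := by
  induction n with
  | zero =>
    rw [zero_add, prod_range_one, diagProd, range_zero, prod_empty, mul_one]
    exact det_fin_one_of x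
  | succ n ih =>
    rw [NmatR, det_submatrix_equiv_self, det_fromBlocks_zero₂₁, ih, det_NhatR,
      prod_range_succ _ (n + 1)]
    ring

/- `solEntry n g i` is entry `i` of the `g`-th diagonal block of `solVec n n`, the vector that `N_n`
maps to a multiple of the last basis vector. -/
def solEntry (n g i : ℕ) : R :=
  a ^ (n - i) * (∏ j ∈ Ico i g, q ^ j * qintR q (n - j)) * (∏ h ∈ Ico g n, F (h + 1)) *
    diagProd x a q n i

lemma solEntry_row {n g i : ℕ} (hig : i ≤ g) (hgn : g < n) :
    (x - a * q ^ i * qintR q (g - i)) * solEntry x a q F n g i -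
        a * q ^ i * qintR q (g - i) * solEntry x a q F n g (i + 1) =
      a * F (g + 1) * (solEntry x a q F n (g + 1) i + solEntry x a q F n (g + 1) (i + 1)) := by
  have hF : ∏ h ∈ Ico g n, F (h + 1) = F (g + 1) * ∏ h ∈ Ico (g + 1) n, F (h + 1) :=
    prod_eq_prod_Ico_succ_bot hgn _
  have ha : a ^ (n - i) = a * a ^ (n - (i + 1)) := by
    rw [← pow_succ', show n - (i + 1) + 1 = n - i by omega]
  simp only [solEntry, diagProd, prod_range_succ, hF, ha, prod_Ico_succ_top hig]
  rcases hig.eq_or_lt with rfl | hlt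
  · simp only [Nat.sub_self, qintR_zero, Ico_self, prod_empty]
    ring
  · have hq : qintR q (n - i) = qintR q (g - i) + q ^ (g - i) * qintR q (n - g) := by
      rw [← qintR_add, show g - i + (n - g) = n - i by omega]
    have hpow : q ^ g = q ^ i * q ^ (g - i) := by rw [← pow_add, Nat.add_sub_cancel' hig]
    rw [prod_Ico_succ_top (Nat.succ_le_of_lt hlt), prod_eq_prod_Ico_succ_bot hlt, hq, hpow]
    ring

lemma solEntry_last_row {n i : ℕ} (hin : i < n) :
    (x - a * q ^ i * qintR q (n - i)) * solEntry x a q F n n i -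
      a * q ^ i * qintR q (n - i) * solEntry x a q F n n (i + 1) = 0 := by
  have ha : a ^ (n - i) = a * a ^ (n - (i + 1)) := by
    rw [← pow_succ', show n - (i + 1) + 1 = n - i by omega]
  simp only [solEntry, diagProd, prod_range_succ, ha, prod_eq_prod_Ico_succ_bot hin]
  ring

lemma solEntry_self (n : ℕ) : solEntry x a q F n n n = diagProd x a q n n := by
  simp [solEntry]

def solVec (n : ℕ) : (m : ℕ) → Fin (Nsz m) → R
  | 0 => fun _ => solEntry x a q F n 0 0
  | m + 1 => Sum.elim (solVec n m) (fun j : Fin (m + 2) => solEntry x a q F n (m + 1) j) ∘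
      (blockEquiv m).symm

lemma NmatR_mulVec_solVec_add_NbarR_mulVec {n m : ℕ} (hm : m < n) :
    NmatR x a q F m *ᵥ solVec x a q F n m +
      NbarR a F m *ᵥ (fun j : Fin (m + 2) => solEntry x a q F n (m + 1) j) = 0 := by
  induction m with
  | zero =>
    ext r
    have hrow := solEntry_row x a q F (le_refl 0) hm
    simp only [Nat.sub_self, qintR_zero, mul_zero, zero_mul, sub_zero] at hrow
    rw [Pi.add_apply, NbarR_mulVec_apply, if_pos (by simp [Nsz])]
    have hr : (r : ℕ) = 0 := Nat.lt_one_iff.mp r.isLt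
    have : Subsingleton (Fin (Nsz 0)) := Fin.subsingleton_one
    simp only [mulVec, dotProduct, Fintype.sum_subsingleton _ r, hr, Pi.zero_apply]
    simp only [NmatR, solVec, Nsz]
    linear_combination hrow
  | succ m ih =>
    ext r
    obtain ⟨z, rfl⟩ := (blockEquiv m).surjective r
    rw [Pi.add_apply, NbarR_mulVec_apply, solVec, NmatR_succ_mulVec, Function.comp_apply,
      Equiv.symm_apply_apply]
    have hsz : Nsz (m + 1) = Nsz m + (m + 2) := rfl
    rcases z with i | j
    · rw [Sum.elim_inl, ih (by omega), if_neg (by rw [blockEquiv_inl_val]; omega)]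
      simp
    · rw [if_pos (by rw [blockEquiv_inr_val]; omega), Sum.elim_inr,
        NhatR_mulVec_apply x a q m (solEntry x a q F n (m + 1)), blockEquiv_inr_val,
        show Nsz m + j - (Nsz (m + 1) - (m + 1 + 1)) = j by omega, Pi.zero_apply]
      linear_combination solEntry_row x a q F (Nat.le_of_lt_succ j.isLt) hm

lemma NmatR_mulVec_solVec (n : ℕ) :
    NmatR x a q F n *ᵥ solVec x a q F n n =
      (x * diagProd x a q n n) • Pi.single ⟨Nsz n - 1, Nat.sub_lt (Nsz_pos n) one_pos⟩ 1 := by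
  ext r
  rcases n with _ | m
  · have : Subsingleton (Fin (Nsz 0)) := Fin.subsingleton_one
    set r₀ : Fin (Nsz 0) := ⟨Nsz 0 - 1, Nat.sub_lt (Nsz_pos 0) one_pos⟩
    obtain rfl : r = r₀ := Subsingleton.elim _ _
    simp only [mulVec, dotProduct, Fintype.sum_subsingleton _ r₀, Pi.smul_apply,
      Pi.single_eq_same]
    simp [NmatR, solVec, solEntry, diagProd]
  · obtain ⟨z, rfl⟩ := (blockEquiv m).surjective r
    have hsz : Nsz (m + 1) = Nsz m + (m + 2) := rfl
    rw [solVec, NmatR_succ_mulVec,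
      NmatR_mulVec_solVec_add_NbarR_mulVec x a q F (Nat.lt_succ_self m),
      Function.comp_apply, Equiv.symm_apply_apply, Pi.smul_apply]
    simp only [Pi.single_apply, Fin.ext_iff]
    rcases z with i | j
    · rw [if_neg (by rw [blockEquiv_inl_val]; omega)]
      simp
    · rw [Sum.elim_inr, NhatR_mulVec_apply x a q m (solEntry x a q F (m + 1) (m + 1)),
        blockEquiv_inr_val]
      by_cases hj : (j : ℕ) = m + 1
      · rw [if_pos (by omega), hj, Nat.sub_self, qintR_zero, solEntry_self]
        ring
      · rw [if_neg (by omega), smul_zero]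
        exact solEntry_last_row x a q F (by omega)

end Blocks

section Specialization

variable {R S : Type*} [CommRing R] [CommRing S] (φ : R →+* S) (x a q : R) (F : ℕ → R)

lemma NhatR_map (m : ℕ) : (NhatR x a q m).map φ = NhatR (φ x) (φ a) (φ q) m := by
  ext i j
  simp [NhatR, apply_ite φ, map_qintR]

lemma NbarR_map (m : ℕ) : (NbarR a F m).map φ = NbarR (φ a) (φ ∘ F) m := by
  ext i j
  simp [NbarR, apply_ite φ]

lemma NmatR_map (n : ℕ) : (NmatR x a q F n).map φ = NmatR (φ x) (φ a) (φ q) (φ ∘ F) n := by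
  induction n with
  | zero => rfl
  | succ n ih =>
    rw [NmatR, NmatR, ← submatrix_map, fromBlocks_map, ih, NbarR_map, NhatR_map,
      Matrix.map_zero _ φ.map_zero]

lemma map_diagProd (n i : ℕ) : φ (diagProd x a q n i) = diagProd (φ x) (φ a) (φ q) n i := by
  simp [diagProd, map_qintR]

lemma solVec_zero (n m : ℕ) : solVec x a q F n m ⟨0, Nsz_pos m⟩ = solEntry x a q F n 0 0 := by
  induction m with
  | zero => rfl
  | succ m ih =>
    rw [solVec, Function.comp_apply,
      show (⟨0, Nsz_pos (m + 1)⟩ : Fin (Nsz (m + 1))) =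
        blockEquiv m (Sum.inl ⟨0, Nsz_pos m⟩) from Fin.ext rfl,
      Equiv.symm_apply_apply, Sum.elim_inl, ih]

open Polynomial in
lemma adjugate_NmatR_zero_last (n : ℕ) :
    (NmatR x a q F n).adjugate ⟨0, Nsz_pos n⟩ ⟨Nsz n - 1, Nat.sub_lt (Nsz_pos n) one_pos⟩ =
      (∏ k ∈ range n, x * diagProd x a q k k) * (a ^ n * ∏ h ∈ range n, F (h + 1)) := by
  -- `x T_n` becomes monic, hence cancellable, when `x` is the indeterminate.
  have hmonic : (X * diagProd (X : R[X]) (C a) (C q) n n).Monic := by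
    refine monic_X.mul (monic_prod_of_monic _ _ fun k _ => ?_)
    simpa [← map_qintR] using monic_X_sub_C (a * q ^ k * qintR q (n - k))
  have hgeneric := mul_eq_adjugate_of_mulVec_eq_smul_single hmonic.isRegular.left
    (by rw [det_NmatR, prod_range_succ]) (NmatR_mulVec_solVec X (C a) (C q) (C ∘ F) n)
    ⟨0, Nsz_pos n⟩
  have hspec : evalRingHom x ∘ C ∘ F = F := by ext; simp
  have hadj := congrArg (evalRingHom x) hgeneric
  change _ = (evalRingHom x).mapMatrix (adjugate _) _ _ at hadj
  rw [RingHom.map_adjugate, RingHom.mapMatrix_apply, NmatR_map, hspec] at hadj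
  simp only [map_mul, map_prod, map_diagProd, solVec_zero, coe_evalRingHom, eval_X, eval_C] at hadj
  rw [← hadj]
  simp [solEntry, diagProd, eval_prod]

end Specialization

theorem stmt17_general {K : Type*} [Field K] (x a q : K) (F : ℕ → K) (n : ℕ) :
    (Ndot x a q F n).det =
      (-1 : K) ^ n.choose 2 * a ^ n * Ffact F n * x ^ n *
        ∏ m ∈ Finset.Icc 1 (n - 1), ∏ k ∈ Finset.Icc 1 (n - m),
          (x - a * q ^ (k - 1) * qint q m) := by
  have hminor : (Ndot x a q F n).det = (-1) ^ (Nsz n - 1) * (Nmat x a q F n).adjugate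
      ⟨0, Nsz_pos n⟩ ⟨Nsz n - 1, Nat.sub_lt (Nsz_pos n) one_pos⟩ := by
    rw [adjugate_apply_zero_last, ← mul_assoc, ← pow_add, Even.neg_one_pow ⟨_, rfl⟩,
      one_mul]
    rfl
  have hdiag : ∏ m ∈ Icc 1 (n - 1), ∏ k ∈ Icc 1 (n - m), (x - a * q ^ (k - 1) * qint q m) =
      ∏ k ∈ range n, diagProd x a q k k :=
    prod_Icc_prod_Icc_eq_prod_range_prod_range (fun m i => x - a * q ^ i * qint q m) n
  rw [hminor, Nmat_eq_NmatR, adjugate_NmatR_zero_last, hdiag, Ffact,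
    ← prod_range_add_one_eq_prod_Icc, prod_mul_distrib, prod_const, card_range, Nsz_sub_one,
    pow_add, pow_mul, neg_one_sq, one_pow, mul_one]
  ring

/-- `det Ṅ_n(x,a) = (-1)^{C(n,2)} a^n F_n! x^n ∏_{m=1}^{n-1} ∏_{k=1}^{n-m} (x - a q^{k-1} [m]_q)`. -/
theorem stmt17 {K : Type*} [Field K] (x a q : K) (F : ℕ → K)
    (hF : ∀ m : ℕ, 1 ≤ m → F m ≠ 0) (n : ℕ) (hn : 1 ≤ n) :
    (Ndot x a q F n).det =
      (-1 : K) ^ n.choose 2 * a ^ n * Ffact F n * x ^ n *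
        ∏ m ∈ Finset.Icc 1 (n - 1), ∏ k ∈ Finset.Icc 1 (n - m),
          (x - a * q ^ (k - 1) * qint q m) :=
  stmt17_general x a q F n
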